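/- arXiv:1110.2512 — 2 statements merged into one kernel-verified Lean document; each statement's English description precedes it below -/
import Mathlib

section
/- Let k ≥ 2 be an integer, p > 1 and c₁ > 0 real numbers, and set γ_i = (p−1)(−i + (k+1)/2) for i = 1,…,k. Let (α_i)_{i=1,…,k} be real numbers and define ζ_i(s) = −(γ_i/2)·log s + α_i for s ∈ (0,∞). Then (ζ_1,…,ζ_k) is a solution of system (S) on (0,∞) if and only if for every i = 2,…,k one has e^{−(2/(p−1))(α_i − α_{i−1})} = ((p−1)/(4c₁))·(i−1)(k+1−i). -/
/-- System (S): for `i = 1,…,k`, `(1/c₁) ζᵢ' = e^{-(2/(p-1))(ζᵢ-ζᵢ₋₁)} - e^{-(2/(p-1))(ζᵢ₊₁-ζᵢ)}`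
on the set `S`, with the convention that the first exponential term is absent (equal to `0`)
when `i = 1` and the second is absent when `i = k`. -/
def SolvesS (k : ℕ) (p c₁ : ℝ) (ζ : ℕ → ℝ → ℝ) (S : Set ℝ) : Prop :=
  ∀ i, 1 ≤ i → i ≤ k → ∀ s ∈ S, HasDerivAt (ζ i)
    (c₁ * ((if 2 ≤ i then Real.exp (-(2 / (p - 1)) * (ζ i s - ζ (i - 1) s)) else 0)
         - (if i < k then Real.exp (-(2 / (p - 1)) * (ζ (i + 1) s - ζ i s)) else 0))) s

/-- the logarithmic ansatz `ζᵢ(s) = -(γᵢ/2) log s + αᵢ`, with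
`γᵢ = (p-1)(-i + (k+1)/2)`, solves system (S) on `(0,∞)` iff
`e^{-(2/(p-1))(αᵢ-αᵢ₋₁)} = ((p-1)/(4c₁))(i-1)(k+1-i)` for all `i = 2,…,k`. -/
theorem stmt0 (k : ℕ) (hk : 2 ≤ k) (p c₁ : ℝ) (hp : 1 < p) (hc₁ : 0 < c₁)
    (γ : ℕ → ℝ) (hγ : ∀ i, γ i = (p - 1) * (-(i : ℝ) + ((k : ℝ) + 1) / 2))
    (α : ℕ → ℝ) (ζ : ℕ → ℝ → ℝ)
    (hζ : ∀ i s, ζ i s = -(γ i / 2) * Real.log s + α i) :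
    SolvesS k p c₁ ζ (Set.Ioi 0) ↔
      ∀ i, 2 ≤ i → i ≤ k →
        Real.exp (-(2 / (p - 1)) * (α i - α (i - 1)))
          = (p - 1) / (4 * c₁) * ((i : ℝ) - 1) * ((k : ℝ) + 1 - (i : ℝ)) := by
  have hp1 : (0:ℝ) < p - 1 := by linarith
  have hp1' : p - 1 ≠ 0 := ne_of_gt hp1
  have hc₁' : c₁ ≠ 0 := ne_of_gt hc₁
  -- the exponential terms in terms of α differences
  have key : ∀ i : ℕ, 2 ≤ i → ∀ s : ℝ, 0 < s →
      Real.exp (-(2 / (p - 1)) * (ζ i s - ζ (i - 1) s))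
        = s⁻¹ * Real.exp (-(2 / (p - 1)) * (α i - α (i - 1))) := by
    intro i hi s hs
    have h1le : 1 ≤ i := le_trans (by norm_num) hi
    have hcast : ((i - 1 : ℕ) : ℝ) = (i : ℝ) - 1 := by
      push_cast [h1le]; ring
    have h1 : ζ i s - ζ (i - 1) s = (p - 1) / 2 * Real.log s + (α i - α (i - 1)) := by
      rw [hζ, hζ, hγ, hγ, hcast]; ring
    rw [h1]
    have h2 : -(2 / (p - 1)) * ((p - 1) / 2 * Real.log s + (α i - α (i - 1)))
        = -Real.log s + -(2 / (p - 1)) * (α i - α (i - 1)) := by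
      field_simp; ring
    rw [h2, Real.exp_add, Real.exp_neg, Real.exp_log hs]
  -- the actual derivative of ζ i
  have hderiv : ∀ (i : ℕ) (s : ℝ), 0 < s → HasDerivAt (ζ i) (-(γ i / 2) * s⁻¹) s := by
    intro i s hs
    have h1 : HasDerivAt (fun t => -(γ i / 2) * Real.log t + α i) (-(γ i / 2) * s⁻¹) s :=
      ((Real.hasDerivAt_log (ne_of_gt hs)).const_mul _).add_const _
    have h2 : ζ i = fun t => -(γ i / 2) * Real.log t + α i := funext fun t => hζ i t
    rw [h2]; exact h1
  constructor
  · intro h i hi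
    induction i, hi using Nat.le_induction with
    | base =>
      intro _
      have hu := (h 1 le_rfl (by omega) 1 (by norm_num)).unique (hderiv 1 1 one_pos)
      rw [if_neg (by norm_num), if_pos (by omega : 1 < k)] at hu
      have hz : ζ (1 + 1) 1 - ζ 1 1 = α 2 - α 1 := by
        rw [hζ, hζ]; simp [Real.log_one]
      rw [hz] at hu
      have hE : Real.exp (-(2 / (p - 1)) * (α 2 - α 1)) = γ 1 / (2 * c₁) := by
        field_simp at hu ⊢; linarith
      have h21 : (2 - 1 : ℕ) = 1 := rfl
      rw [h21, hE, hγ 1]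
      push_cast
      field_simp
      ring
    | succ n hn ih =>
      intro hnk
      have hnk' : n ≤ k := by omega
      have hu := (h n (by omega) hnk' 1 (by norm_num)).unique (hderiv n 1 one_pos)
      rw [if_pos hn, if_pos (by omega : n < k)] at hu
      have hz1 : ζ n 1 - ζ (n - 1) 1 = α n - α (n - 1) := by
        rw [hζ, hζ]; simp [Real.log_one]
      have hz2 : ζ (n + 1) 1 - ζ n 1 = α (n + 1) - α n := by
        rw [hζ, hζ]; simp [Real.log_one]
      rw [hz1, hz2] at hu
      rw [ih hnk'] at hu
      have hsub : (n + 1 - 1 : ℕ) = n := rfl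
      rw [hsub]
      have hγn := hγ n
      push_cast
      field_simp at hu ⊢
      nlinarith [hu, hγn]
  · intro hE i h1 hik s hs
    have hs' : (0:ℝ) < s := hs
    have hd := hderiv i s hs'
    convert hd using 1
    by_cases h2 : 2 ≤ i
    · rw [if_pos h2, key i h2 s hs', hE i h2 hik]
      by_cases hik' : i < k
      · have hk2 := key (i + 1) (by omega) s hs'
        simp only [Nat.add_sub_cancel] at hk2
        have hE' := hE (i + 1) (by omega) (by omega)
        simp only [Nat.add_sub_cancel] at hE'
        rw [if_pos hik', hk2, hE']
        rw [hγ i]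
        push_cast
        field_simp
        ring
      · rw [if_neg hik']
        have hik2 : i = k := by omega
        subst hik2
        rw [hγ i]
        field_simp
        ring
    · have hi1 : i = 1 := by omega
      subst hi1
      have hk2 := key 2 le_rfl s hs'
      simp only [show (2 - 1 : ℕ) = 1 from rfl] at hk2
      rw [if_neg h2, if_pos (by omega : 1 < k), show (1:ℕ)+1 = 2 from rfl, hk2,
        hE 2 le_rfl hk, hγ 1]
      push_cast
      field_simp
      ring
end

section
/- (Lyapunov's theorem for semiflows.) Let K be a compact subset of ℝ^k, let x₀ be a point in the topological interior of K, and let φ : [0,∞) × K → K be a continuous map satisfying φ(0,x) = x and φ(t+s, x) = φ(t, φ(s,x)) for all t, s ≥ 0 and x ∈ K. Assume there is a continuous function L : K → ℝ such that for every x ∈ K with x ≠ x₀, the map t ↦ L(φ(t,x)) is strictly decreasing on [0,∞). Then: (a) φ(t, x₀) = x₀ for all t ≥ 0 (x₀ is a stationary point, and the only one in K); (b) L(x) > L(x₀) for every x ∈ K with x ≠ x₀ (L attains its infimum on K at x₀ only); and (c) for every x ∈ K, φ(t,x) → x₀ as t → +∞ (x₀ is a global attractor in K). -/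
/-!
Along the trajectory of `x ≠ x₀`, `L` decreases to a limit `c`. Every ω-limit point `z` of the
trajectory then has `L z = L (φ 1 z) = c`, which strict decrease forbids unless `z = x₀`; by
compactness the trajectory converges to `x₀`, so `L x₀ = c < L x`.
-/

open Filter Topology Set

theorem MapClusterPt.eq_of_tendsto {X α : Type*} [TopologicalSpace X] [T2Space X]
    {F : Filter α} {u : α → X} {x y : X} (hx : MapClusterPt x F u) (hu : Tendsto u F (𝓝 y)) :
    x = y :=
  eq_of_nhds_neBot (hx.clusterPt.mono hu).neBot

theorem ContinuousWithinAt.mapClusterPt_comp {X Y α : Type*} [TopologicalSpace X]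
    [TopologicalSpace Y] {F : Filter α} {u : α → X} {x : X} {s : Set X} {f : X → Y}
    (hf : ContinuousWithinAt f s x) (hu : MapClusterPt x F u) (hs : ∀ᶠ a in F, u a ∈ s) :
    MapClusterPt (f x) F (f ∘ u) :=
  hu.tendsto_comp' (hf.mono_left (inf_le_inf_left _ (tendsto_principal.2 hs)))

theorem AntitoneOn.exists_tendsto_atTop {f : ℝ → ℝ} {a : ℝ} (hf : AntitoneOn f (Ici a))
    (hb : BddBelow (f '' Ici a)) : ∃ c, Tendsto f atTop (𝓝 c) := by
  set g : ℝ → ℝ := fun t => f (max t a)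
  have hg : Antitone g := fun s t hst =>
    hf (le_max_right s a) (le_max_right t a) (max_le_max_right a hst)
  have hgb : BddBelow (range g) :=
    hb.mono (range_subset_iff.2 fun t => mem_image_of_mem f (le_max_right t a))
  refine ⟨_, (tendsto_atTop_ciInf hg hgb).congr' ?_⟩
  filter_upwards [eventually_ge_atTop a] with t ht
  simp only [g, max_eq_left ht]

theorem StrictAntiOn.lt_of_tendsto_atTop {α β : Type*} [LinearOrder α] [NoMaxOrder α]
    [LinearOrder β] [TopologicalSpace β] [OrderClosedTopology β] {f : α → β} {a : α} {l : β}
    (hf : StrictAntiOn f (Ici a)) (h : Tendsto f atTop (𝓝 l)) : l < f a := by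
  obtain ⟨b, hab⟩ := exists_gt a
  have : Nonempty α := ⟨a⟩
  refine lt_of_le_of_lt (le_of_tendsto h ?_) (hf self_mem_Ici hab.le hab)
  filter_upwards [eventually_ge_atTop b] with t hbt
  exact hf.antitoneOn hab.le (hab.le.trans hbt) hbt

theorem StrictAntiOn.lt_of_continuousWithinAt {α β : Type*} [LinearOrder α] [DenselyOrdered α]
    [TopologicalSpace α] [OrderTopology α] [LinearOrder β] [TopologicalSpace β]
    [OrderClosedTopology β] {f : α → β} {a b : α} (hf : StrictAntiOn f (Ioi a))
    (hc : ContinuousWithinAt f (Ioi a) a) (hab : a < b) : f b < f a := by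
  obtain ⟨m, ham, hmb⟩ := exists_between hab
  have : (𝓝[>] a).NeBot := nhdsGT_neBot_of_exists_gt ⟨b, hab⟩
  refine (hf ham hab hmb).trans_le (ge_of_tendsto hc ?_)
  filter_upwards [Ioo_mem_nhdsGT ham] with t ht
  exact (hf ht.1 ham ht.2).le

variable {X : Type*} [TopologicalSpace X]

/-- `φ` restricts to a continuous semiflow on `K`; outside `[0, ∞) × K` it is arbitrary. -/
structure IsSemiflowOn (φ : ℝ → X → X) (K : Set X) : Prop where
  continuousOn : ContinuousOn (fun q : ℝ × X => φ q.1 q.2) (Ici 0 ×ˢ K)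
  mapsTo : ∀ t : ℝ, 0 ≤ t → ∀ x ∈ K, φ t x ∈ K
  apply_zero : ∀ x ∈ K, φ 0 x = x
  apply_add : ∀ t : ℝ, 0 ≤ t → ∀ s : ℝ, 0 ≤ s → ∀ x ∈ K, φ (t + s) x = φ t (φ s x)

def IsStrictLyapunovOn (φ : ℝ → X → X) (K : Set X) (L : X → ℝ) (x₀ : X) : Prop :=
  ∀ x ∈ K, x ≠ x₀ → StrictAntiOn (fun t => L (φ t x)) (Ici 0)

variable {φ : ℝ → X → X} {K : Set X} {L : X → ℝ} {x₀ x z : X} {t : ℝ}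

namespace IsSemiflowOn

theorem continuousOn_apply (hφ : IsSemiflowOn φ K) (ht : 0 ≤ t) : ContinuousOn (φ t) K :=
  hφ.continuousOn.comp (Continuous.prodMk_right t).continuousOn fun _ hx => ⟨ht, hx⟩

theorem continuousOn_orbit (hφ : IsSemiflowOn φ K) (hx : x ∈ K) :
    ContinuousOn (fun t => φ t x) (Ici 0) :=
  hφ.continuousOn.comp (Continuous.prodMk_left x).continuousOn fun _ ht => ⟨ht, hx⟩

theorem eventually_mem (hφ : IsSemiflowOn φ K) (hx : x ∈ K) : ∀ᶠ t in atTop, φ t x ∈ K :=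
  eventually_atTop.2 ⟨0, fun t ht => hφ.mapsTo t ht x hx⟩

end IsSemiflowOn

namespace IsStrictLyapunovOn

theorem eq_of_apply_eq_self (hL : IsStrictLyapunovOn φ K L x₀) (hφ : IsSemiflowOn φ K)
    (hx : x ∈ K) (ht : 0 < t) (hper : φ t x = x) : x = x₀ := by
  by_contra hne
  have := hL x hx hne self_mem_Ici ht.le ht
  simp only [hper, hφ.apply_zero x hx, lt_irrefl] at this

theorem eq_of_mapClusterPt (hL : IsStrictLyapunovOn φ K L x₀) (hφ : IsSemiflowOn φ K)
    (hLc : ContinuousOn L K) (hLb : BddBelow (L '' K)) (hx : x ∈ K) (hne : x ≠ x₀) (hz : z ∈ K)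
    (hcl : MapClusterPt z atTop fun t => φ t x) : z = x₀ := by
  have horbit := hφ.eventually_mem hx
  obtain ⟨c, hc⟩ : ∃ c, Tendsto (fun t => L (φ t x)) atTop (𝓝 c) :=
    (hL x hx hne).antitoneOn.exists_tendsto_atTop <| hLb.mono <| by
      rintro _ ⟨t, ht, rfl⟩
      exact mem_image_of_mem L (hφ.mapsTo t ht x hx)
  have hLz : L z = c := ((hLc z hz).mapClusterPt_comp hcl horbit).eq_of_tendsto hc
  have hcl₁ : MapClusterPt (φ 1 z) atTop fun t => φ (1 + t) x := by
    refine ((hφ.continuousOn_apply zero_le_one z hz).mapClusterPt_comp hcl horbit).congrFun ?_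
    filter_upwards [eventually_ge_atTop 0] with t ht
    exact (hφ.apply_add 1 zero_le_one t ht x hx).symm
  have hL₁z : L (φ 1 z) = c := by
    refine ((hLc _ (hφ.mapsTo 1 zero_le_one z hz)).mapClusterPt_comp hcl₁ ?_).eq_of_tendsto
      (hc.comp (tendsto_atTop_add_const_left _ 1 tendsto_id))
    filter_upwards [eventually_ge_atTop 0] with t ht
    exact hφ.mapsTo _ (by linarith) x hx
  by_contra hz₀
  have := hL z hz hz₀ self_mem_Ici (mem_Ici.2 zero_le_one) zero_lt_one
  simp only [hφ.apply_zero z hz, hLz, hL₁z, lt_irrefl] at this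

theorem tendsto_of_ne (hL : IsStrictLyapunovOn φ K L x₀) (hφ : IsSemiflowOn φ K)
    (hK : IsCompact K) (hLc : ContinuousOn L K) (hx : x ∈ K) (hne : x ≠ x₀) :
    Tendsto (fun t => φ t x) atTop (𝓝 x₀) :=
  hK.tendsto_nhds_of_unique_mapClusterPt (hφ.eventually_mem hx) fun _ hz hcl =>
    hL.eq_of_mapClusterPt hφ hLc (hK.image_of_continuousOn hLc).bddBelow hx hne hz hcl

theorem lt_of_ne (hL : IsStrictLyapunovOn φ K L x₀) (hφ : IsSemiflowOn φ K)
    (hK : IsCompact K) (hLc : ContinuousOn L K) (hx₀ : x₀ ∈ K) (hx : x ∈ K) (hne : x ≠ x₀) :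
    L x₀ < L x := by
  have hlim : Tendsto (fun t => L (φ t x)) atTop (𝓝 (L x₀)) :=
    (hLc x₀ hx₀).tendsto.comp
      (tendsto_nhdsWithin_iff.2 ⟨hL.tendsto_of_ne hφ hK hLc hx hne, hφ.eventually_mem hx⟩)
  simpa only [hφ.apply_zero x hx] using (hL x hx hne).lt_of_tendsto_atTop hlim

/-- If the trajectory of `x₀` ever left `x₀`, it would never return (that would make its later
points periodic), so `L` would strictly decrease along it from time `0` on; but `L` is minimal
at `x₀`. -/
theorem apply_self (hL : IsStrictLyapunovOn φ K L x₀) (hφ : IsSemiflowOn φ K)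
    (hK : IsCompact K) (hLc : ContinuousOn L K) (hx₀ : x₀ ∈ K) (ht : 0 ≤ t) : φ t x₀ = x₀ := by
  by_contra hy
  have ht₀ : 0 < t := ht.lt_of_ne (by rintro rfl; exact hy (hφ.apply_zero x₀ hx₀))
  have hyK := hφ.mapsTo t ht x₀ hx₀
  have hleave : ∀ s, 0 < s → φ s x₀ ≠ x₀ := fun s hs hper =>
    hy <| hL.eq_of_apply_eq_self hφ hyK hs <| by
      rw [← hφ.apply_add s hs.le t ht x₀ hx₀, add_comm, hφ.apply_add t ht s hs.le x₀ hx₀, hper]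
  have hanti : StrictAntiOn (fun s => L (φ s x₀)) (Ioi 0) := by
    intro s hs u _ hsu
    have hsK := hφ.mapsTo s (le_of_lt hs) x₀ hx₀
    have := hL _ hsK (hleave s hs) self_mem_Ici (mem_Ici.2 (sub_nonneg.2 hsu.le)) (sub_pos.2 hsu)
    simp only at this ⊢
    rwa [hφ.apply_zero _ hsK, ← hφ.apply_add _ (sub_nonneg.2 hsu.le) s (le_of_lt hs) x₀ hx₀,
      sub_add_cancel] at this
  have hcont : ContinuousWithinAt (fun s => L (φ s x₀)) (Ioi 0) 0 :=
    ((hLc.comp (hφ.continuousOn_orbit hx₀) fun s hs => hφ.mapsTo s hs x₀ hx₀) 0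
      self_mem_Ici).mono Ioi_subset_Ici_self
  have hlt := hanti.lt_of_continuousWithinAt hcont ht₀
  rw [hφ.apply_zero x₀ hx₀] at hlt
  exact (hL.lt_of_ne hφ hK hLc hx₀ hyK hy).not_gt hlt

theorem tendsto (hL : IsStrictLyapunovOn φ K L x₀) (hφ : IsSemiflowOn φ K)
    (hK : IsCompact K) (hLc : ContinuousOn L K) (hx₀ : x₀ ∈ K) (hx : x ∈ K) :
    Tendsto (fun t => φ t x) atTop (𝓝 x₀) := by
  rcases eq_or_ne x x₀ with rfl | hne
  · refine tendsto_const_nhds.congr' (eventually_atTop.2 ⟨0, fun t ht => ?_⟩)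
    exact (hL.apply_self hφ hK hLc hx ht).symm
  · exact hL.tendsto_of_ne hφ hK hLc hx hne

end IsStrictLyapunovOn

/-- Lyapunov's theorem for semiflows: let `K ⊆ ℝ^k` be compact, `x₀` an
interior point of `K`, `φ` a continuous semiflow on `K`, and `L` a continuous function
on `K` which is strictly decreasing along every trajectory starting at a point `x ≠ x₀`.
Then (a) `x₀` is a stationary point, and the only one in `K`; (b) `L(x) > L(x₀)` for
every `x ∈ K ∖ {x₀}`; (c) `φ(t,x) → x₀` as `t → ∞` for every `x ∈ K`. -/
theorem stmt15 (k : ℕ) (K : Set (EuclideanSpace ℝ (Fin k))) (hK : IsCompact K)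
    (x₀ : EuclideanSpace ℝ (Fin k)) (hx₀ : x₀ ∈ interior K)
    (φ : ℝ → EuclideanSpace ℝ (Fin k) → EuclideanSpace ℝ (Fin k))
    (hφcont : ContinuousOn (fun q : ℝ × EuclideanSpace ℝ (Fin k) => φ q.1 q.2)
      (Set.Ici (0 : ℝ) ×ˢ K))
    (hφmaps : ∀ t : ℝ, 0 ≤ t → ∀ x ∈ K, φ t x ∈ K)
    (hφzero : ∀ x ∈ K, φ 0 x = x)
    (hφadd : ∀ t : ℝ, 0 ≤ t → ∀ s : ℝ, 0 ≤ s → ∀ x ∈ K, φ (t + s) x = φ t (φ s x))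
    (L : EuclideanSpace ℝ (Fin k) → ℝ) (hL : ContinuousOn L K)
    (hdec : ∀ x ∈ K, x ≠ x₀ → StrictAntiOn (fun t => L (φ t x)) (Set.Ici (0 : ℝ))) :
    (∀ t : ℝ, 0 ≤ t → φ t x₀ = x₀) ∧
    (∀ x ∈ K, (∀ t : ℝ, 0 ≤ t → φ t x = x) → x = x₀) ∧
    (∀ x ∈ K, x ≠ x₀ → L x₀ < L x) ∧
    (∀ x ∈ K, Filter.Tendsto (fun t => φ t x) Filter.atTop (nhds x₀)) := by
  have hφ : IsSemiflowOn φ K := ⟨hφcont, hφmaps, hφzero, hφadd⟩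
  have hLyap : IsStrictLyapunovOn φ K L x₀ := hdec
  have hx₀K : x₀ ∈ K := interior_subset hx₀
  exact ⟨fun _ ht => hLyap.apply_self hφ hK hL hx₀K ht,
    fun _ hx hfix => hLyap.eq_of_apply_eq_self hφ hx one_pos (hfix 1 zero_le_one),
    fun _ hx hne => hLyap.lt_of_ne hφ hK hL hx₀K hx hne,
    fun _ hx => hLyap.tendsto hφ hK hL hx₀K hx⟩
end
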